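/- arXiv:1509.05239 — 2 statements merged into one kernel-verified Lean document; each statement's English description precedes it below -/
import Mathlib

section
/- For the TRIP-Stern sequence for (e,e,13), the maximal terms lie on the right-most path of the tree: for every n and every word v ∈ {0,1}ⁿ, each of the three entries of Δ(v) is at most the first entry of f₁ⁿ(1,1,1); hence the maximum entry m_n of level n equals the first entry of f₁ⁿ(1,1,1). -/
/-- `f₀(a,b,c) = (b,c,a+c)` for the triplet `(e,e,13)`. -/
def f0 (p : ℤ × ℤ × ℤ) : ℤ × ℤ × ℤ := (p.2.1, p.2.2, p.1 + p.2.2)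

/-- `f₁(a,b,c) = (a+c,b,a)` for the triplet `(e,e,13)`. -/
def f1 (p : ℤ × ℤ × ℤ) : ℤ × ℤ × ℤ := (p.1 + p.2.2, p.2.1, p.1)

/-- One step of the TRIP-Stern tree: apply `f₁` on a `true` and `f₀` on a `false`. -/
def step (p : ℤ × ℤ × ℤ) (i : Bool) : ℤ × ℤ × ℤ := if i then f1 p else f0 p

/-- `Δ(v) = f_{iₙ}(⋯ f_{i₁}(1,1,1) ⋯)`, applying `f_{i₁}` first. -/
def delta (v : List Bool) : ℤ × ℤ × ℤ := v.foldl step (1, 1, 1)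

/-- The maximum coordinate of a triple. -/
def maxEntry (p : ℤ × ℤ × ℤ) : ℤ := max p.1 (max p.2.1 p.2.2)

/-- `m n` is the maximum entry of level `n` of the TRIP-Stern sequence for `(e,e,13)`. -/
noncomputable def m (n : ℕ) : ℤ :=
  Finset.sup' Finset.univ Finset.univ_nonempty
    (fun v : Fin n → Bool => maxEntry (delta (List.ofFn v)))

/-!
Along any path of the tree the entries of `(a,b,c)` grow at most like the Fibonacci numbers:
if all entries are at most `x` and `a + c ≤ y` with `x ≤ y`, then both `f₀` and `f₁` produce a
triple whose entries are at most `y` and whose first-plus-third sum is at most `x + y`. Starting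
from `(1,1,1)`, level `n` is therefore bounded by `F(n+2)`, and the right-most path
`f₁ⁿ(1,1,1) = (F(n+2), 1, F(n+1))` attains this bound.
-/

def TripleBounded (x y : ℤ) (p : ℤ × ℤ × ℤ) : Prop :=
  p.1 ≤ x ∧ p.2.1 ≤ x ∧ p.2.2 ≤ x ∧ p.1 + p.2.2 ≤ y

lemma tripleBounded_step {x y : ℤ} {p : ℤ × ℤ × ℤ} (hxy : x ≤ y) (hp : TripleBounded x y p)
    (i : Bool) : TripleBounded y (x + y) (step p i) := by
  obtain ⟨ha, hb, hc, hac⟩ := hp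
  cases i <;> simp only [TripleBounded, step, f0, f1, Bool.false_eq_true, if_true, if_false] <;> omega

lemma tripleBounded_foldl_step (v : List Bool) {k : ℕ} {p : ℤ × ℤ × ℤ}
    (hp : TripleBounded (Nat.fib (k + 2)) (Nat.fib (k + 3)) p) :
    TripleBounded (Nat.fib (k + v.length + 2)) (Nat.fib (k + v.length + 3)) (v.foldl step p) := by
  induction v generalizing k p with
  | nil => exact hp
  | cons i v ih =>
    have hstep : TripleBounded (Nat.fib (k + 3)) (Nat.fib (k + 4)) (step p i) := by
      have hfib : (Nat.fib (k + 4) : ℤ) = Nat.fib (k + 2) + Nat.fib (k + 3) := by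
        exact_mod_cast Nat.fib_add_two
      rw [hfib]
      exact tripleBounded_step (by exact_mod_cast Nat.fib_mono (by omega)) hp i
    have := ih hstep
    rwa [List.length_cons, show k + (v.length + 1) = k + 1 + v.length by omega]

lemma tripleBounded_delta (v : List Bool) :
    TripleBounded (Nat.fib (v.length + 2)) (Nat.fib (v.length + 3)) (delta v) := by
  have h := tripleBounded_foldl_step v (k := 0) (p := (1, 1, 1)) (by norm_num [TripleBounded])
  rwa [zero_add] at h

lemma iterate_f1_one_one_one (n : ℕ) :
    f1^[n] (1, 1, 1) = ((Nat.fib (n + 2) : ℤ), 1, (Nat.fib (n + 1) : ℤ)) := by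
  induction n with
  | zero => rfl
  | succ n ih =>
    rw [Function.iterate_succ_apply', ih, f1, Nat.fib_add_two (n := n + 1)]
    push_cast
    ring_nf

lemma foldl_step_replicate_true (n : ℕ) (p : ℤ × ℤ × ℤ) :
    (List.replicate n true).foldl step p = f1^[n] p := by
  induction n generalizing p with
  | zero => rfl
  | succ n ih => exact ih (f1 p)

lemma delta_ofFn_true (n : ℕ) : delta (List.ofFn fun _ : Fin n => true) = f1^[n] (1, 1, 1) := by
  rw [List.ofFn_const]
  exact foldl_step_replicate_true n _

/-- For the TRIP-Stern sequence for `(e,e,13)`, the maximal terms lie on the right-most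
path of the tree: every entry of every level-`n` triple `Δ(v)` is at most the first
entry of `f₁ⁿ(1,1,1)`, and hence the maximum entry `m n` of level `n` equals the first
entry of `f₁ⁿ(1,1,1)`. -/
theorem maxTerms_rightmost_ee13 :
    (∀ (n : ℕ) (v : Fin n → Bool),
      (delta (List.ofFn v)).1 ≤ (f1^[n] (1, 1, 1)).1 ∧
      (delta (List.ofFn v)).2.1 ≤ (f1^[n] (1, 1, 1)).1 ∧
      (delta (List.ofFn v)).2.2 ≤ (f1^[n] (1, 1, 1)).1) ∧
    (∀ n : ℕ, m n = (f1^[n] (1, 1, 1)).1) := by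
  have hbound : ∀ (n : ℕ) (v : Fin n → Bool),
      TripleBounded (f1^[n] (1, 1, 1)).1 (Nat.fib (n + 3)) (delta (List.ofFn v)) := by
    intro n v
    simpa [iterate_f1_one_one_one] using tripleBounded_delta (List.ofFn v)
  refine ⟨fun n v => ⟨(hbound n v).1, (hbound n v).2.1, (hbound n v).2.2.1⟩, fun n => ?_⟩
  apply le_antisymm
  · refine Finset.sup'_le _ _ fun v _ => ?_
    obtain ⟨ha, hb, hc, -⟩ := hbound n v
    exact max_le ha (max_le hb hc)
  · calc (f1^[n] (1, 1, 1)).1 ≤ maxEntry (f1^[n] (1, 1, 1)) := le_max_left _ _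
      _ = maxEntry (delta (List.ofFn fun _ : Fin n => true)) := by rw [delta_ofFn_true]
      _ ≤ m n := Finset.le_sup' (fun v : Fin n → Bool => maxEntry (delta (List.ofFn v)))
          (Finset.mem_univ _)
end

section
/- For the TRIP-Stern sequence for (e,e,13), the maximum entry m_n of level n equals the Fibonacci number Fib(n+2) (where Fib(1) = Fib(2) = 1); in particular m_0 = 1, m_1 = 2, and m_n = m_{n-1} + m_{n-2} for all n ≥ 2. -/
/-!
The all-`true` word gives `Δ = (Fib(n+2), 1, Fib(n+1))`, since `f₁` acts on the outer entries as
the Fibonacci step `(a, c) ↦ (a + c, a)`; this is the lower bound. For the upper bound, every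
triple `(a, b, c)` of level `n` has all entries at most `Fib(n+2)` and `a + c ≤ Fib(n+3)`: both
`f₀` and `f₁` build their new entries from `a`, `b`, `c` and `a + c`, and the only new outer sum,
`a + b + c` resp. `2a + c`, is at most `Fib(n+2) + Fib(n+3) = Fib(n+4)`.
-/

lemma delta_append_singleton (l : List Bool) (i : Bool) :
    delta (l ++ [i]) = step (delta l) i := by
  simp [delta]

lemma delta_replicate_true (n : ℕ) :
    delta (List.replicate n true) = ((Nat.fib (n + 2) : ℤ), 1, (Nat.fib (n + 1) : ℤ)) := by
  induction n with
  | zero => simp [delta]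
  | succ n ih =>
    rw [List.replicate_succ', delta_append_singleton, ih]
    simp [step, f1, Nat.fib_add_two (n := n + 1), add_comm (Nat.fib (n + 2) : ℤ)]

def BoundedBy (x y : ℤ) (p : ℤ × ℤ × ℤ) : Prop :=
  maxEntry p ≤ x ∧ p.1 + p.2.2 ≤ y

lemma BoundedBy.map_step {x y : ℤ} {p : ℤ × ℤ × ℤ} (hxy : x ≤ y) (hp : BoundedBy x y p)
    (i : Bool) : BoundedBy y (x + y) (step p i) := by
  obtain ⟨hmax, hsum⟩ := hp
  simp only [maxEntry, max_le_iff] at hmax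
  cases i <;> simp [BoundedBy, _root_.step, f0, f1, maxEntry] <;> omega

lemma boundedBy_fib_delta (l : List Bool) :
    BoundedBy (Nat.fib (l.length + 2)) (Nat.fib (l.length + 3)) (delta l) := by
  induction l using List.reverseRecOn with
  | nil => simp [BoundedBy, delta, maxEntry, Nat.fib]
  | append_singleton l i ih =>
    have h := ih.map_step (mod_cast Nat.fib_mono (by omega)) i
    rw [← Nat.cast_add, ← Nat.fib_add_two] at h
    simpa [delta_append_singleton] using h

theorem m_eq_fib (n : ℕ) : m n = Nat.fib (n + 2) := by
  apply le_antisymm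
  · refine Finset.sup'_le _ _ fun v _ => ?_
    simpa using (boundedBy_fib_delta (List.ofFn v)).1
  · calc (Nat.fib (n + 2) : ℤ) ≤ maxEntry (delta (List.ofFn fun _ : Fin n => true)) := by
          rw [List.ofFn_const, delta_replicate_true]
          exact le_max_left _ _
      _ ≤ m n := Finset.le_sup' (fun v : Fin n → Bool => maxEntry (delta (List.ofFn v)))
          (Finset.mem_univ _)

/-- For the TRIP-Stern sequence for `(e,e,13)`, the maximum entry of level `n` is the
Fibonacci number `Fib(n+2)` (with `Fib 1 = Fib 2 = 1`); in particular `m 0 = 1`,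
`m 1 = 2`, and `m n = m (n-1) + m (n-2)` for all `n ≥ 2`. -/
theorem maxTerms_fib_ee13 :
    (∀ n : ℕ, m n = (Nat.fib (n + 2) : ℤ)) ∧
    m 0 = 1 ∧ m 1 = 2 ∧
    (∀ n : ℕ, 2 ≤ n → m n = m (n - 1) + m (n - 2)) := by
  refine ⟨m_eq_fib, by simp [m_eq_fib], by simp [m_eq_fib, Nat.fib_add_two], fun n hn => ?_⟩
  obtain ⟨k, rfl⟩ := Nat.exists_eq_add_of_le' hn
  simp only [Nat.add_sub_cancel, m_eq_fib, show k + 2 - 1 = k + 1 by omega, Nat.fib_add_two]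
  push_cast
  ring
end
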